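/- There is a universal constant c > 0 such that the following holds. Let d ≥ 2 and let P(S^{d-1}, δ) denote the packing number of the unit sphere in ℝ^d at scale δ. For every ε with 0 < ε < 1/8 and every integer k ≥ 1, there exist arbitrarily large integers n and a family X of n points in ℝ^d (points may be repeated) such that every finite set ξ ⊆ ℝ^d satisfying Φ(ξ, X) ≤ ε · Δ_k(X) has cardinality |ξ| ≥ c · P(S^{d-1}, √(8ε)) · k · (log n)/√ε. -/

import Mathlib

/-- k-means cost of a family `X : Fin n → ℝ^d` with respect to a finite
(nonempty) center set `C ⊆ ℝ^d`: `Φ(C, X) = Σ_i min_{c ∈ C} ‖X i − c‖²`. -/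
noncomputable def kmeansCost {d n : ℕ} (C : Finset (EuclideanSpace ℝ (Fin d)))
    (X : Fin n → EuclideanSpace ℝ (Fin d)) : ℝ :=
  ∑ i, sInf ((fun c => dist (X i) c ^ 2) '' (C : Set (EuclideanSpace ℝ (Fin d))))

/-- Optimal k-means cost `Δ_k(X)`: infimum of `Φ(C, X)` over sets `C ⊆ ℝ^d`
with `|C| = k`. -/
noncomputable def kmeansOpt {d n : ℕ} (k : ℕ) (X : Fin n → EuclideanSpace ℝ (Fin d)) : ℝ :=
  sInf {r : ℝ | ∃ C : Finset (EuclideanSpace ℝ (Fin d)), C.card = k ∧ kmeansCost C X = r}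

/-- Packing number `P(S^{d-1}, δ)` of the unit sphere in `ℝ^d` at scale `δ`:
the maximum cardinality of a set of unit vectors in which any two distinct
elements are at Euclidean distance at least `δ`. -/
noncomputable def packingNumber (d : ℕ) (δ : ℝ) : ℕ :=
  sSup {m : ℕ | ∃ S : Finset (EuclideanSpace ℝ (Fin d)), S.card = m ∧
    (∀ p ∈ S, ‖p‖ = 1) ∧
    ∀ x ∈ S, ∀ y ∈ S, x ≠ y → δ ≤ dist x y}

/-!
Let `δ = √(8ε)` and let `S` be a `δ`-packing of the unit sphere of maximal size. Take `k` centres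
`z g` at mutual distance `≥ 5`; around each centre put, for every level `j < L` and direction
`p ∈ S`, the point `z g + r_j p` with multiplicity `w_j`, where `r_j = w_j ^ (-1/2)`. Every such
site costs exactly `1` against the centres, so `Δ_k ≤ k |S| L`. The weights grow geometrically,
with ratio `1 + O(δ)` but fast enough that the shells `‖· - z g‖ = r_j` lie farther apart than the
radius `(2δ/5) r_j` of a ball around a site, so these balls are pairwise disjoint. A site whose ball
misses `ξ` costs at least `(2δ/5)² = 32ε/25 > ε`, hence `Φ(ξ, X) ≤ ε Δ_k` forces `ξ` to meet at
least `7/32` of the `k |S| L` balls. Finally `n ≤ k |S| L · (10/δ) (1 + 10δ)^L`, so for large `L`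
we get `log n ≤ 31 √ε L`, and `|ξ| ≥ (7/32) k |S| L` gives the bound with `c = 1/200`.
-/

open Finset Metric Filter Real

section Packing

variable {δ : ℝ}

theorem bddAbove_packing_cards (d : ℕ) (hδ : 0 < δ) :
    BddAbove {m : ℕ | ∃ S : Finset (EuclideanSpace ℝ (Fin d)), S.card = m ∧
      (∀ p ∈ S, ‖p‖ = 1) ∧ ∀ x ∈ S, ∀ y ∈ S, x ≠ y → δ ≤ dist x y} := by
  lift δ to NNReal using hδ.le
  obtain ⟨N, -, hN, hcover⟩ := exists_finite_isCover_of_isCompact (ε := δ / 4)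
    (div_pos (by exact_mod_cast hδ) four_pos).ne'
    (isCompact_sphere (0 : EuclideanSpace ℝ (Fin d)) 1)
  refine ⟨N.ncard, ?_⟩
  rintro _ ⟨S, rfl, hS1, hSsep⟩
  have hsep : IsSeparated ((2 * (δ / 4) : NNReal) : ENNReal)
      (S : Set (EuclideanSpace ℝ (Fin d))) := by
    intro x hx y hy hxy
    rw [edist_dist, ← ENNReal.ofReal_coe_nnreal,
      ENNReal.ofReal_lt_ofReal_iff_of_nonneg (by positivity)]
    have := hSsep x hx y hy hxy
    push_cast
    linarith
  have := (hsep.encard_le_packingNumber (fun p hp => by simpa using hS1 p hp)).trans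
    ((packingNumber_two_mul_le_externalCoveringNumber _ _).trans
      hcover.externalCoveringNumber_le_encard)
  rw [Set.encard_coe_eq_coe_finsetCard, ← hN.cast_ncard_eq] at this
  exact_mod_cast this

theorem exists_finset_card_eq_packingNumber (d : ℕ) (hδ : 0 < δ) :
    ∃ S : Finset (EuclideanSpace ℝ (Fin d)), S.card = packingNumber d δ ∧
      (∀ p ∈ S, ‖p‖ = 1) ∧ ∀ x ∈ S, ∀ y ∈ S, x ≠ y → δ ≤ dist x y :=
  Nat.sSup_mem (by exact ⟨0, ∅, by simp⟩) (bddAbove_packing_cards d hδ)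

theorem one_le_packingNumber {d : ℕ} (hd : 0 < d) (hδ : 0 < δ) : 1 ≤ packingNumber d δ :=
  le_csSup (bddAbove_packing_cards d hδ)
    ⟨{EuclideanSpace.single ⟨0, hd⟩ 1}, by simp, by simp, by simp⟩

end Packing

section PointCost

variable {α : Type*} [PseudoMetricSpace α] {C : Set α} {x c : α}

theorem sInf_dist_sq_nonneg : 0 ≤ sInf ((fun c => dist x c ^ 2) '' C) :=
  Real.sInf_nonneg (by rintro _ ⟨c, -, rfl⟩; positivity)

theorem sInf_dist_sq_le (hc : c ∈ C) : sInf ((fun c => dist x c ^ 2) '' C) ≤ dist x c ^ 2 :=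
  csInf_le ⟨0, by rintro _ ⟨c, -, rfl⟩; positivity⟩ ⟨c, hc, rfl⟩

theorem sq_le_sInf_dist_sq {r : ℝ} (hC : C.Nonempty) (hr : 0 ≤ r) (h : ∀ c ∈ C, r ≤ dist x c) :
    r ^ 2 ≤ sInf ((fun c => dist x c ^ 2) '' C) :=
  le_csInf (hC.image _) (by rintro _ ⟨c, hc, rfl⟩; exact pow_le_pow_left₀ hr (h c hc) 2)

end PointCost

noncomputable def replicateFamily {ι α : Type*} [Fintype ι] (w : ι → ℕ) (x : ι → α) :
    Fin (∑ i, w i) → α :=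
  fun t => x ((Fintype.equivFinOfCardEq (by simp)).symm t : Σ i, Fin (w i)).1

theorem sum_replicateFamily {ι α M : Type*} [Fintype ι] [NonAssocSemiring M] (w : ι → ℕ)
    (x : ι → α) (f : α → M) : ∑ t, f (replicateFamily w x t) = ∑ i, (w i : M) * f (x i) := by
  calc ∑ t, f (replicateFamily w x t)
      = ∑ s : Σ i, Fin (w i), f (x s.1) := Equiv.sum_comp _ (fun s : Σ i, Fin (w i) => f (x s.1))
    _ = ∑ i, w i * f (x i) := by simp [Fintype.sum_sigma]

theorem card_filter_exists_mem_closedBall_le {α ι : Type*} [PseudoMetricSpace α] [Fintype ι]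
    {x : ι → α} {ρ : ι → ℝ}
    (hdisj : Pairwise fun i j => Disjoint (closedBall (x i) (ρ i)) (closedBall (x j) (ρ j)))
    (ξ : Finset α) [DecidablePred fun i => ∃ c ∈ ξ, c ∈ closedBall (x i) (ρ i)] :
    #{i | ∃ c ∈ ξ, c ∈ closedBall (x i) (ρ i)} ≤ #ξ :=
  card_le_card_of_forall_subsingleton (fun i c => c ∈ closedBall (x i) (ρ i))
    (fun i hi => by simpa using hi)
    (fun c _ i hi j hj => by_contra fun hij => Set.disjoint_left.mp (hdisj hij) hi.2 hj.2)

section KMeans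

variable {d : ℕ} {ι : Type*} [Fintype ι] {w : ι → ℕ} {x : ι → EuclideanSpace ℝ (Fin d)}

theorem kmeansCost_nonneg {n : ℕ} (C : Finset (EuclideanSpace ℝ (Fin d)))
    (X : Fin n → EuclideanSpace ℝ (Fin d)) : 0 ≤ kmeansCost C X :=
  sum_nonneg fun _ _ => sInf_dist_sq_nonneg

theorem kmeansOpt_le_kmeansCost {n k : ℕ} {C : Finset (EuclideanSpace ℝ (Fin d))}
    (X : Fin n → EuclideanSpace ℝ (Fin d)) (hC : C.card = k) : kmeansOpt k X ≤ kmeansCost C X :=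
  csInf_le ⟨0, by rintro _ ⟨C, -, rfl⟩; exact kmeansCost_nonneg C X⟩ ⟨C, hC, rfl⟩

theorem kmeansCost_replicateFamily (C : Finset (EuclideanSpace ℝ (Fin d))) :
    kmeansCost C (replicateFamily w x) =
      ∑ i, w i * sInf ((fun c => dist (x i) c ^ 2) '' (C : Set (EuclideanSpace ℝ (Fin d)))) :=
  sum_replicateFamily w x fun y =>
    sInf ((fun c => dist y c ^ 2) '' (C : Set (EuclideanSpace ℝ (Fin d))))

theorem kmeansOpt_replicateFamily_le {k : ℕ} {z : Fin k → EuclideanSpace ℝ (Fin d)}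
    (hz : Function.Injective z) (g : ι → Fin k) :
    kmeansOpt k (replicateFamily w x) ≤ ∑ i, w i * dist (x i) (z (g i)) ^ 2 := by
  classical
  calc kmeansOpt k (replicateFamily w x)
      ≤ kmeansCost (univ.image z) (replicateFamily w x) :=
        kmeansOpt_le_kmeansCost _
          (by rw [card_image_of_injective _ hz, card_univ, Fintype.card_fin])
    _ ≤ ∑ i, w i * dist (x i) (z (g i)) ^ 2 := by
        rw [kmeansCost_replicateFamily]
        gcongr with i
        exact sInf_dist_sq_le (by simp)

variable {ξ : Finset (EuclideanSpace ℝ (Fin d))}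

theorem mul_card_sub_card_le_kmeansCost {ρ : ι → ℝ} {β : ℝ} (hβ : 0 ≤ β) (hρ : ∀ i, 0 ≤ ρ i)
    (hwρ : ∀ i, β ≤ w i * ρ i ^ 2)
    (hdisj : Pairwise fun i j => Disjoint (closedBall (x i) (ρ i)) (closedBall (x j) (ρ j)))
    (hξ : ξ.Nonempty) :
    β * (Fintype.card ι - #ξ) ≤ kmeansCost ξ (replicateFamily w x) := by
  classical
  have hsplit := card_filter_add_card_filter_not (s := univ)
    fun i => ∃ c ∈ ξ, c ∈ closedBall (x i) (ρ i)
  have hhit := card_filter_exists_mem_closedBall_le hdisj ξ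
  set miss := univ.filter fun i => ¬ ∃ c ∈ ξ, c ∈ closedBall (x i) (ρ i) with hmiss_def
  have hcard : (Fintype.card ι : ℝ) - #ξ ≤ #miss := by
    rw [card_univ] at hsplit
    have : Fintype.card ι ≤ #ξ + #miss := by omega
    exact sub_le_iff_le_add'.mpr (by exact_mod_cast this)
  have hmiss : ∀ i ∈ miss, β ≤ w i *
      sInf ((fun c => dist (x i) c ^ 2) '' (ξ : Set (EuclideanSpace ℝ (Fin d)))) := by
    intro i hi
    have hfar : ∀ c ∈ (ξ : Set _), ρ i ≤ dist (x i) c := fun c hc => by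
      simp only [hmiss_def, mem_filter, not_exists, not_and, mem_closedBall, not_le] at hi
      exact (dist_comm c (x i) ▸ hi.2 c hc).le
    exact (hwρ i).trans (by gcongr; exact sq_le_sInf_dist_sq (by simpa using hξ) (hρ i) hfar)
  calc β * (Fintype.card ι - #ξ) ≤ β * #miss := by gcongr
    _ = ∑ i ∈ miss, β := by rw [sum_const, nsmul_eq_mul, mul_comm]
    _ ≤ ∑ i ∈ miss, w i *
          sInf ((fun c => dist (x i) c ^ 2) '' (ξ : Set (EuclideanSpace ℝ (Fin d)))) :=
        sum_le_sum hmiss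
    _ ≤ ∑ i, w i * sInf ((fun c => dist (x i) c ^ 2) '' (ξ : Set (EuclideanSpace ℝ (Fin d)))) :=
        sum_le_sum_of_subset_of_nonneg (filter_subset _ _)
          fun i _ _ => mul_nonneg (Nat.cast_nonneg _) sInf_dist_sq_nonneg
    _ = kmeansCost ξ (replicateFamily w x) := (kmeansCost_replicateFamily ξ).symm

theorem sub_mul_card_le_mul_card_of_kmeansCost_le {k : ℕ}
    {z : Fin k → EuclideanSpace ℝ (Fin d)} (hz : Function.Injective z) (g : ι → Fin k)
    {r : ι → ℝ} {a ε : ℝ} (ha : 0 ≤ a) (hε : 0 ≤ ε) (hr : ∀ i, 0 ≤ r i)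
    (hwr : ∀ i, w i * r i ^ 2 = 1) (hxz : ∀ i, dist (x i) (z (g i)) = r i)
    (hdisj : Pairwise fun i j =>
      Disjoint (closedBall (x i) (a * r i)) (closedBall (x j) (a * r j)))
    (hξ : ξ.Nonempty)
    (hcost : kmeansCost ξ (replicateFamily w x) ≤ ε * kmeansOpt k (replicateFamily w x)) :
    (a ^ 2 - ε) * Fintype.card ι ≤ a ^ 2 * #ξ := by
  have hopt : kmeansOpt k (replicateFamily w x) ≤ Fintype.card ι := by
    refine (kmeansOpt_replicateFamily_le hz g).trans_eq ?_
    simp [hxz, hwr]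
  have hlow := mul_card_sub_card_le_kmeansCost (β := a ^ 2) (by positivity)
    (fun i => mul_nonneg ha (hr i)) (fun i => by rw [mul_pow, mul_left_comm, hwr, mul_one])
    hdisj hξ
  nlinarith [mul_le_mul_of_nonneg_left hopt hε]

end KMeans

section Shells

variable {F : Type*} [NormedAddCommGroup F] [NormedSpace ℝ F] {G P J : Type*}

def shellPoint (z : G → F) (u : P → F) (r : J → ℝ) (s : G × P × J) : F :=
  z s.1 + r s.2.2 • u s.2.1

theorem abs_dist_sub_le_of_mem_closedBall {z p c : F} {r a : ℝ} (hp : ‖p‖ = 1) (hr : 0 ≤ r)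
    (hc : c ∈ closedBall (z + r • p) (a * r)) : |dist c z - r| ≤ a * r := by
  have h := abs_dist_sub_le c (z + r • p) z
  rw [dist_self_add_left, norm_smul, hp, mul_one, Real.norm_of_nonneg hr] at h
  exact h.trans hc

theorem pairwise_disjoint_closedBall_shellPoint [LinearOrder J] {z : G → F} {u : P → F}
    {r : J → ℝ} {a δ : ℝ} (hz : Pairwise fun g h => 4 < dist (z g) (z h))
    (hu : ∀ p, ‖u p‖ = 1) (husep : Pairwise fun p q => δ ≤ dist (u p) (u q))
    (hr0 : ∀ j, 0 < r j) (hr1 : ∀ j, r j ≤ 1) (hr : ∀ i j, i < j → (1 + a) * r j < (1 - a) * r i)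
    (ha : a ≤ 1) (haδ : 2 * a < δ) :
    Pairwise fun s t => Disjoint (closedBall (shellPoint z u r s) (a * r s.2.2))
      (closedBall (shellPoint z u r t) (a * r t.2.2)) := by
  rintro ⟨g, p, j⟩ ⟨g', p', j'⟩ hne
  refine Set.disjoint_left.mpr fun c hc hc' => hne ?_
  have h := abs_le.mp (abs_dist_sub_le_of_mem_closedBall (hu p) (hr0 j).le hc)
  have h' := abs_le.mp (abs_dist_sub_le_of_mem_closedBall (hu p') (hr0 j').le hc')
  obtain rfl : g = g' := by
    by_contra hg
    nlinarith [hz hg, dist_triangle_left (z g) (z g') c, hr1 j, hr1 j', hr0 j, hr0 j']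
  obtain rfl : j = j' := by
    by_contra hj
    rcases lt_or_gt_of_ne hj with hlt | hlt
    · linarith [hr j j' hlt]
    · linarith [hr j' j hlt]
  obtain rfl : p = p' := by
    by_contra hp
    have hfar : r j * δ ≤ dist (shellPoint z u r (g, p, j)) (shellPoint z u r (g, p', j)) := by
      rw [shellPoint, shellPoint, dist_add_left, dist_smul₀, Real.norm_of_nonneg (hr0 j).le]
      exact mul_le_mul_of_nonneg_left (husep hp) (hr0 j).le
    have hnear := dist_triangle_left (shellPoint z u r (g, p, j)) (shellPoint z u r (g, p', j)) c
    nlinarith [hr0 j, mem_closedBall.mp hc, mem_closedBall.mp hc']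
  rfl

end Shells

theorem mul_inv_sqrt_lt_mul_inv_sqrt {a b x y : ℝ} (hb : 0 ≤ b) (hx : 0 < x) (hy : 0 < y)
    (h : a ^ 2 * x < b ^ 2 * y) : a * (√y)⁻¹ < b * (√x)⁻¹ := by
  rw [← div_eq_mul_inv, ← div_eq_mul_inv, div_lt_div_iff₀ (sqrt_pos.mpr hy) (sqrt_pos.mpr hx)]
  refine lt_of_pow_lt_pow_left₀ 2 (by positivity) ?_
  rwa [mul_pow, mul_pow, sq_sqrt hx.le, sq_sqrt hy.le]

section GeomWeight

noncomputable def geomWeight (B T : ℝ) (j : ℕ) : ℕ := ⌈B * T ^ j⌉₊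

variable {B T : ℝ}

theorem geomWeight_pos (hB : 0 < B) (hT : 0 < T) (j : ℕ) : 0 < geomWeight B T j :=
  Nat.ceil_pos.mpr (by positivity)

theorem geomWeight_le (hB : 1 ≤ B) (hT : 1 ≤ T) (j : ℕ) :
    (geomWeight B T j : ℝ) ≤ 2 * B * T ^ j := by
  have h1 : 1 ≤ B * T ^ j := one_le_mul_of_one_le_of_one_le hB (one_le_pow₀ hT)
  have h2 := Nat.ceil_lt_add_one (by positivity : 0 ≤ B * T ^ j)
  rw [geomWeight]
  linarith

theorem mul_geomWeight_lt_mul_geomWeight {α β : ℝ} (hB : 0 < B) (hT : 1 ≤ T) (hα : 0 < α)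
    (hβ : 0 ≤ β) (h : α * (B + 1) ≤ β * T * B) {i j : ℕ} (hij : i < j) :
    α * geomWeight B T i < β * geomWeight B T j := by
  set y := B * T ^ i
  have hy : B ≤ y := le_mul_of_one_le_right hB.le (one_le_pow₀ hT)
  have hi : (geomWeight B T i : ℝ) < y + 1 := Nat.ceil_lt_add_one (by positivity)
  have hstep : α * (y + 1) ≤ β * T * y := by
    refine le_of_mul_le_mul_right ?_ hB
    nlinarith [mul_le_mul_of_nonneg_right h (by positivity : 0 ≤ y)]
  have hj : y * T ≤ geomWeight B T j :=
    calc y * T = B * T ^ (i + 1) := by rw [pow_succ, mul_assoc]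
      _ ≤ B * T ^ j := by gcongr; exact hij
      _ ≤ geomWeight B T j := Nat.le_ceil _
  calc α * geomWeight B T i < α * (y + 1) := by gcongr
    _ ≤ β * (y * T) := by linarith
    _ ≤ β * geomWeight B T j := by gcongr

theorem log_sum_geomWeight_le {ι : Type*} [Fintype ι] [Nonempty ι] {L : ℕ} {m : ι → ℕ}
    (hm : ∀ i, m i < L) (hB : 1 ≤ B) (hT : 1 ≤ T) :
    log ((∑ i, geomWeight B T (m i) : ℕ) : ℝ) ≤ log (2 * B * Fintype.card ι) + L * (T - 1) := by
  have hsum : (∑ i, geomWeight B T (m i) : ℝ) ≤ 2 * B * Fintype.card ι * T ^ L := by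
    calc (∑ i, geomWeight B T (m i) : ℝ) ≤ ∑ _i : ι, 2 * B * T ^ L :=
          sum_le_sum fun i _ => (geomWeight_le hB hT _).trans (by gcongr; exact (hm i).le)
      _ = 2 * B * Fintype.card ι * T ^ L := by rw [sum_const, card_univ, nsmul_eq_mul]; ring
  have hpos : (0 : ℝ) < ∑ i, (geomWeight B T (m i) : ℝ) :=
    sum_pos (fun i _ => by exact_mod_cast geomWeight_pos (by linarith) (by linarith) _)
      univ_nonempty
  calc log (∑ i, geomWeight B T (m i) : ℕ) ≤ log (2 * B * Fintype.card ι * T ^ L) := by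
        push_cast
        exact log_le_log hpos hsum
    _ = log (2 * B * Fintype.card ι) + L * log T := by
        rw [log_mul (by positivity) (by positivity), log_pow]
    _ ≤ log (2 * B * Fintype.card ι) + L * (T - 1) := by
        gcongr; exact log_le_sub_one_of_pos (by linarith)

theorem one_add_sq_mul_geomWeight_lt {δ : ℝ} (hδ0 : 0 < δ) (hδ1 : δ < 1) {i j : ℕ}
    (hij : i < j) : (1 + 2 * δ / 5) ^ 2 * geomWeight (5 / δ) (1 + 10 * δ) i <
      (1 - 2 * δ / 5) ^ 2 * geomWeight (5 / δ) (1 + 10 * δ) j := by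
  refine mul_geomWeight_lt_mul_geomWeight (by positivity) (by linarith) (by positivity)
    (by positivity) ?_ hij
  have h : (1 + 2 * δ / 5) ^ 2 * (5 + δ) ≤ (1 - 2 * δ / 5) ^ 2 * (1 + 10 * δ) * 5 := by
    nlinarith [mul_pos hδ0 hδ0, mul_pos (mul_pos hδ0 hδ0) hδ0]
  calc (1 + 2 * δ / 5) ^ 2 * (5 / δ + 1) = (1 + 2 * δ / 5) ^ 2 * (5 + δ) / δ := by
        field_simp
    _ ≤ (1 - 2 * δ / 5) ^ 2 * (1 + 10 * δ) * 5 / δ := by gcongr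
    _ = (1 - 2 * δ / 5) ^ 2 * (1 + 10 * δ) * (5 / δ) := by ring

end GeomWeight

theorem eventually_log_mul_le {A c : ℝ} (hA : A ≠ 0) (hc : 0 < c) :
    ∀ᶠ L : ℕ in atTop, log (A * L) ≤ c * L := by
  have h := ((Asymptotics.isLittleO_const_id_atTop (log A)).add isLittleO_log_id_atTop).bound hc
  filter_upwards [h.natCast_atTop, eventually_gt_atTop 0] with L hL hL0
  rw [log_mul hA (by positivity)]
  simpa using (le_abs_self _).trans hL

theorem sqrt_eight_mul_le_three_mul_sqrt (ε : ℝ) : √(8 * ε) ≤ 3 * √ε := by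
  rw [sqrt_mul (by norm_num) ε]
  gcongr
  exact (sqrt_le_left (by norm_num)).mpr (by norm_num)

section HardInstance

variable {d : ℕ} (hd : 0 < d) (k L : ℕ) (S : Finset (EuclideanSpace ℝ (Fin d))) (w : ℕ → ℕ)

noncomputable def groupCenter (g : Fin k) : EuclideanSpace ℝ (Fin d) :=
  EuclideanSpace.single ⟨0, hd⟩ (5 * (g : ℕ) : ℝ)

theorem four_lt_dist_groupCenter :
    Pairwise fun g h : Fin k => 4 < dist (groupCenter hd k g) (groupCenter hd k h) := by
  intro g h hgh
  have hsep : (1 : ℝ) ≤ |((g : ℕ) : ℝ) - (h : ℕ)| := by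
    have hne : ((g : ℕ) : ℤ) ≠ (h : ℕ) := by exact_mod_cast Fin.val_ne_of_ne hgh
    exact_mod_cast Int.one_le_abs (sub_ne_zero.mpr hne)
  simp only [groupCenter, PiLp.dist_single_same, Real.dist_eq]
  rw [← mul_sub, abs_mul, abs_of_pos (by norm_num : (0 : ℝ) < 5)]
  linarith

theorem groupCenter_injective : Function.Injective (groupCenter hd k) := fun g h hgh => by
  by_contra hne
  have h4 : 4 < dist (groupCenter hd k g) (groupCenter hd k h) :=
    four_lt_dist_groupCenter hd k hne
  rw [hgh, dist_self] at h4
  norm_num at h4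

noncomputable def hardInstance :
    Fin (∑ i : Fin k × S × Fin L, w i.2.2) → EuclideanSpace ℝ (Fin d) :=
  replicateFamily (fun i => w i.2.2)
    (shellPoint (groupCenter hd k) (Subtype.val : S → _) fun j : Fin L => (√(w j : ℝ))⁻¹)

theorem mul_le_card_of_kmeansCost_le_hardInstance {δ ε : ℝ} (hδ0 : 0 < δ) (hδ1 : δ < 1)
    (hδε : δ ^ 2 = 8 * ε) (hS1 : ∀ p ∈ S, ‖p‖ = 1)
    (hSsep : ∀ x ∈ S, ∀ y ∈ S, x ≠ y → δ ≤ dist x y) (hw : ∀ j, 0 < w j)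
    (hgrowth : ∀ i j, i < j → (1 + 2 * δ / 5) ^ 2 * w i < (1 - 2 * δ / 5) ^ 2 * w j)
    {ξ : Finset (EuclideanSpace ℝ (Fin d))} (hξ : ξ.Nonempty)
    (hcost : kmeansCost ξ (hardInstance hd k L S w) ≤ ε * kmeansOpt k (hardInstance hd k L S w)) :
    7 / 32 * (k * #S * L : ℝ) ≤ #ξ := by
  set r : Fin L → ℝ := fun j => (√(w j : ℝ))⁻¹
  have hwpos (j : ℕ) : (0 : ℝ) < w j := by exact_mod_cast hw j
  have hr0 (j : Fin L) : 0 < r j := inv_pos.mpr (sqrt_pos.mpr (hwpos j))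
  have hr1 (j : Fin L) : r j ≤ 1 :=
    inv_le_one_of_one_le₀ (one_le_sqrt.mpr (by exact_mod_cast hw j))
  have hdisj := pairwise_disjoint_closedBall_shellPoint (four_lt_dist_groupCenter hd k)
    (u := (Subtype.val : S → _)) (fun p => hS1 p p.2)
    (fun p q hpq => hSsep p p.2 q q.2 (Subtype.coe_ne_coe.mpr hpq)) hr0 hr1
    (fun i j hij => mul_inv_sqrt_lt_mul_inv_sqrt (by linarith) (hwpos i) (hwpos j)
      (hgrowth i j hij)) (by linarith) (by linarith)
  have key := sub_mul_card_le_mul_card_of_kmeansCost_le (groupCenter_injective hd k) Prod.fst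
    (r := fun s => r s.2.2) (by positivity) (by nlinarith) (fun s => (hr0 _).le)
    (fun s => by simp [r, inv_pow, sq_sqrt (hwpos _).le, mul_inv_cancel₀ (hwpos _).ne'])
    (fun s => by simp [shellPoint, norm_smul, hS1 _ s.2.1.2, r]) hdisj hξ hcost
  have hcard : Fintype.card (Fin k × S × Fin L) = k * #S * L := by simp [mul_assoc]
  have ha : (2 * δ / 5) ^ 2 = 32 / 25 * ε := by rw [div_pow, mul_pow, hδε]; ring
  rw [hcard, ha] at key
  push_cast at key
  have hε : 0 < ε := by nlinarith
  exact le_of_mul_le_mul_left (by linarith) (by positivity : (0 : ℝ) < 32 / 25 * ε)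

theorem mul_le_sum_prod_of_pos (hw : ∀ j, 0 < w j) :
    k * #S * L ≤ ∑ i : Fin k × S × Fin L, w i.2.2 := by
  simpa [mul_assoc] using card_nsmul_le_sum univ (fun i : Fin k × S × Fin L => w i.2.2) 1
    fun i _ => hw _

theorem log_sum_geomWeight_prod_le {B T : ℝ} (hB : 1 ≤ B) (hT : 1 ≤ T) (hk : 0 < k)
    (hS : S.Nonempty) (hL : 0 < L) :
    log (∑ i : Fin k × S × Fin L, geomWeight B T i.2.2 : ℕ) ≤
      log (2 * B * (k * #S) * L) + L * (T - 1) := by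
  have : Nonempty (Fin k × S × Fin L) := ⟨(⟨0, hk⟩, ⟨hS.choose, hS.choose_spec⟩, ⟨0, hL⟩)⟩
  simpa [mul_assoc] using log_sum_geomWeight_le (fun i : Fin k × S × Fin L => i.2.2.2) hB hT

end HardInstance

/-- lower bound for Euclidean k-means. There is a universal
constant `c > 0` such that for every `d ≥ 2`, `0 < ε < 1/8`, `k ≥ 1`, there are
arbitrarily large `n` and a family `X` of `n` points in `ℝ^d` (repetitions allowed)
such that every finite nonempty set `ξ ⊆ ℝ^d` with `Φ(ξ, X) ≤ ε · Δ_k(X)` has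
`|ξ| ≥ c · P(S^{d-1}, √(8ε)) · k · log n / √ε`. -/
theorem kmeans_lower_bound :
    ∃ c : ℝ, 0 < c ∧
      ∀ d : ℕ, 2 ≤ d →
      ∀ ε : ℝ, 0 < ε → ε < 1 / 8 →
      ∀ k : ℕ, 1 ≤ k →
      ∀ N : ℕ, ∃ n : ℕ, N ≤ n ∧
        ∃ X : Fin n → EuclideanSpace ℝ (Fin d),
          ∀ ξ : Finset (EuclideanSpace ℝ (Fin d)), ξ.Nonempty →
            kmeansCost ξ X ≤ ε * kmeansOpt k X →
            c * (packingNumber d (Real.sqrt (8 * ε)) : ℝ) * k * Real.log n / Real.sqrt ε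
              ≤ (ξ.card : ℝ) := by
  refine ⟨1 / 200, by norm_num, fun d hd ε hε hε8 k hk N => ?_⟩
  set δ := √(8 * ε)
  have hδ0 : 0 < δ := sqrt_pos.mpr (by positivity)
  have hδε : δ ^ 2 = 8 * ε := sq_sqrt (by positivity)
  have hδ1 : δ < 1 := by nlinarith
  have hδσ : δ ≤ 3 * √ε := sqrt_eight_mul_le_three_mul_sqrt ε
  obtain ⟨S, hS, hS1, hSsep⟩ := exists_finset_card_eq_packingNumber d hδ0
  have hSne : S.Nonempty := card_pos.mp (hS ▸ one_le_packingNumber (by omega) hδ0)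
  obtain ⟨L, hNL, hL⟩ := ((eventually_gt_atTop N).and (eventually_log_mul_le
    (A := 2 * (5 / δ) * (k * #S)) (by positivity) (sqrt_pos.mpr hε))).exists
  set w := geomWeight (5 / δ) (1 + 10 * δ)
  have hw := geomWeight_pos (B := 5 / δ) (T := 1 + 10 * δ) (by positivity) (by positivity)
  refine ⟨_, ?_, hardInstance (by omega) k L S w, fun ξ hξ hcost => ?_⟩
  · exact hNL.le.trans <| (Nat.le_mul_of_pos_left L (Nat.mul_pos hk (card_pos.mpr hSne))).trans
      (mul_le_sum_prod_of_pos k L S w hw)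
  have hξcard := mul_le_card_of_kmeansCost_le_hardInstance _ k L S w hδ0 hδ1 hδε hS1 hSsep hw
    (fun i j => one_add_sq_mul_geomWeight_lt hδ0 hδ1) hξ hcost
  have hn := log_sum_geomWeight_prod_le k L S (B := 5 / δ) (T := 1 + 10 * δ)
    ((one_le_div hδ0).mpr (by linarith)) (by linarith) hk hSne (by omega)
  have hlogn : log (∑ i : Fin k × S × Fin L, w i.2.2 : ℕ) ≤ 31 * √ε * L := by nlinarith
  rw [← hS, div_le_iff₀ (sqrt_pos.mpr hε)]
  nlinarith [mul_le_mul_of_nonneg_left hlogn (by positivity : (0 : ℝ) ≤ #S * k),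
    mul_le_mul_of_nonneg_right hξcard (sqrt_nonneg ε),
    (by positivity : (0 : ℝ) ≤ k * #S * L * √ε)]
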